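/- arXiv:1203.0117 — 8 statements merged into one kernel-verified Lean document; each statement's English description precedes it below -/
import Mathlib

section
/- Weak duality for CSSL: let d, N ≥ 1, S₁, …, S_N symmetric positive semidefinite real d×d matrices, t₁, …, t_N > 0 with Σᵢ tᵢ = 1, ρ, γ > 0, and p ∈ (1, ∞) with conjugate exponent q = p/(p−1). For every primal-feasible pair (Θ, Ω) (i.e., Θ + Ωᵢ symmetric positive definite for all i) and every dual-feasible family (W₁, …, W_N) (i.e., each Wᵢ symmetric positive definite and for all j, j', |Σᵢ tᵢ(W_{i,jj'} − S_{i,jj'})| ≤ ρ and (Σᵢ tᵢ^q |W_{i,jj'} − S_{i,jj'}|^q)^{1/q} ≤ γ), one has g(Θ, Ω) ≤ −Σᵢ tᵢ log det Wᵢ − d. -/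
noncomputable def matL1 {d : ℕ} (A : Matrix (Fin d) (Fin d) ℝ) : ℝ :=
  ∑ j, ∑ j', |A j j'|

noncomputable def matL1p {d N : ℕ} (p : ℝ) (Ω : Fin N → Matrix (Fin d) (Fin d) ℝ) : ℝ :=
  ∑ j : Fin d, ∑ j' : Fin d, (∑ i, |Ω i j j'| ^ p) ^ (1 / p)

/-- The CSSL objective `g(Θ, Ω)`. -/
noncomputable def cssl {d N : ℕ} (S : Fin N → Matrix (Fin d) (Fin d) ℝ) (t : Fin N → ℝ)
    (ρ γ p : ℝ) (Θ : Matrix (Fin d) (Fin d) ℝ) (Ω : Fin N → Matrix (Fin d) (Fin d) ℝ) : ℝ :=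
  ∑ i, t i * (Real.log (Θ + Ω i).det - Matrix.trace (S i * (Θ + Ω i)))
    - ρ * matL1 Θ - γ * matL1p p Ω

/-!
Each summand of the objective is controlled by `log det A + log det W ≤ tr (W A) - d` for positive
definite `A`, `W`: writing `W = Bᴴ B`, this is `log x ≤ x - 1` summed over the eigenvalues of
`B A Bᴴ`. With `A = Θ + Ωᵢ` what remains is the coupling term `Σᵢ tᵢ tr ((Wᵢ - Sᵢ)(Θ + Ωᵢ))`. Its
`Θ`-part is at most `ρ ‖Θ‖₁` because the weighted average of the `Wᵢ - Sᵢ` is entrywise bounded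
by `ρ`, and its `Ω`-part is at most `γ ‖Ω‖_{1,p}` by Hölder's inequality over `i`, entry by entry.
-/

open Finset Matrix

namespace Matrix

theorem trace_mul_eq_sum_sum {m n R : Type*} [Fintype m] [Fintype n]
    [NonUnitalNonAssocSemiring R] (A : Matrix m n R) (B : Matrix n m R) :
    (A * B).trace = ∑ i, ∑ j, A i j * B j i := by
  simp [trace, mul_apply]

variable {n : Type*} [Fintype n] [DecidableEq n]

theorem PosDef.log_det_le_trace_sub_card {M : Matrix n n ℝ} (hM : M.PosDef) :
    Real.log M.det ≤ M.trace - Fintype.card n := by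
  have hH := hM.isHermitian
  have hpos : ∀ k, 0 < hH.eigenvalues k := hM.eigenvalues_pos
  rw [hH.det_eq_prod_eigenvalues, hH.trace_eq_sum_eigenvalues]
  simp only [RCLike.ofReal_real_eq_id, id]
  rw [Real.log_prod fun k _ => (hpos k).ne', ← Finset.card_univ, ← nsmul_one, ← sum_const,
    ← sum_sub_distrib]
  exact sum_le_sum fun k _ => Real.log_le_sub_one_of_pos (hpos k)

open scoped MatrixOrder in
theorem PosDef.log_det_add_log_det_le_trace_mul {A W : Matrix n n ℝ} (hA : A.PosDef)
    (hW : W.PosDef) :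
    Real.log A.det + Real.log W.det ≤ (W * A).trace - Fintype.card n := by
  obtain ⟨B, rfl⟩ := CStarAlgebra.nonneg_iff_eq_star_mul_self.mp hW.posSemidef.nonneg
  rw [star_eq_conjTranspose] at hW ⊢
  have hdet : (B * A * Bᴴ).det = A.det * (Bᴴ * B).det := by
    simp only [det_mul, det_conjTranspose, star_trivial]; ring
  have hBAB : (B * A * Bᴴ).PosDef :=
    (hA.posSemidef.mul_mul_conjTranspose_same B).posDef_iff_det_ne_zero.mpr <| by
      rw [hdet]; exact (mul_pos hA.det_pos hW.det_pos).ne'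
  have htr : (B * A * Bᴴ).trace = (Bᴴ * B * A).trace := by
    rw [trace_mul_cycle, Matrix.mul_assoc]
  have := hBAB.log_det_le_trace_sub_card
  rwa [hdet, htr, Real.log_mul hA.det_pos.ne' hW.det_pos.ne'] at this

theorem PosDef.log_det_sub_trace_mul_le {A W : Matrix n n ℝ} (hA : A.PosDef) (hW : W.PosDef)
    (S : Matrix n n ℝ) :
    Real.log A.det - (S * A).trace ≤
      -Real.log W.det - Fintype.card n + ((W - S) * A).trace := by
  have := hA.log_det_add_log_det_le_trace_mul hW
  rw [sub_mul, trace_sub]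
  linarith

end Matrix

section EntrywiseDuality

variable {d : ℕ}

theorem trace_mul_le_mul_matL1 {A B : Matrix (Fin d) (Fin d) ℝ} {ρ : ℝ}
    (hA : ∀ j k, |A j k| ≤ ρ) : (A * B).trace ≤ ρ * matL1 B := by
  calc (A * B).trace = ∑ j, ∑ k, A j k * B k j := trace_mul_eq_sum_sum A B
    _ ≤ ∑ j, ∑ k, ρ * |B k j| :=
        sum_le_sum fun j _ => sum_le_sum fun k _ =>
          (le_abs_self _).trans <| (abs_mul _ _).trans_le <|
            mul_le_mul_of_nonneg_right (hA j k) (abs_nonneg _)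
    _ = ρ * matL1 B := by
        rw [matL1, sum_comm, mul_sum]
        simp only [mul_sum]

theorem sum_trace_mul_le_mul_matL1p {N : ℕ} {p q γ : ℝ} (hpq : p.HolderConjugate q)
    {A B : Fin N → Matrix (Fin d) (Fin d) ℝ}
    (hA : ∀ j k, (∑ i, |A i j k| ^ q) ^ (1 / q) ≤ γ) :
    ∑ i, (A i * B i).trace ≤ γ * matL1p p B := by
  calc ∑ i, (A i * B i).trace = ∑ j, ∑ k, ∑ i, A i j k * B i k j := by
        simp only [trace_mul_eq_sum_sum]
        rw [sum_comm]
        exact sum_congr rfl fun _ _ => sum_comm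
    _ ≤ ∑ j, ∑ k, γ * (∑ i, |B i k j| ^ p) ^ (1 / p) := by
        gcongr with j _ k _
        calc ∑ i, A i j k * B i k j
            ≤ (∑ i, |A i j k| ^ q) ^ (1 / q) * (∑ i, |B i k j| ^ p) ^ (1 / p) :=
              Real.inner_le_Lp_mul_Lq _ _ _ hpq.symm
          _ ≤ γ * (∑ i, |B i k j| ^ p) ^ (1 / p) := by gcongr; exact hA j k
    _ = γ * matL1p p B := by
        rw [matL1p, sum_comm, mul_sum]
        simp only [mul_sum]

end EntrywiseDuality

theorem cssl_weak_duality_general (d N : ℕ)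
    (S : Fin N → Matrix (Fin d) (Fin d) ℝ)
    (t : Fin N → ℝ) (ht : ∀ i, 0 < t i) (htsum : ∑ i, t i = 1)
    (ρ γ : ℝ)
    (p q : ℝ) (hp : 1 < p) (hq : q = p / (p - 1))
    (Θ : Matrix (Fin d) (Fin d) ℝ) (Ω : Fin N → Matrix (Fin d) (Fin d) ℝ)
    (hprimal : ∀ i, (Θ + Ω i).PosDef)
    (W : Fin N → Matrix (Fin d) (Fin d) ℝ)
    (hWpd : ∀ i, (W i).PosDef)
    (hWρ : ∀ j j', |∑ i, t i * (W i j j' - S i j j')| ≤ ρ)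
    (hWγ : ∀ j j', (∑ i, t i ^ q * |W i j j' - S i j j'| ^ q) ^ (1 / q) ≤ γ) :
    cssl S t ρ γ p Θ Ω ≤ (- ∑ i, t i * Real.log (W i).det) - d := by
  set D : Fin N → Matrix (Fin d) (Fin d) ℝ := fun i => t i • (W i - S i) with hD
  have hpq : p.HolderConjugate q := hq ▸ Real.HolderConjugate.conjExponent hp
  have hΘ : ((∑ i, D i) * Θ).trace ≤ ρ * matL1 Θ :=
    trace_mul_le_mul_matL1 fun j k => by simpa [hD, Matrix.sum_apply] using hWρ j k
  have hΩ : ∑ i, (D i * Ω i).trace ≤ γ * matL1p p Ω :=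
    sum_trace_mul_le_mul_matL1p hpq fun j k => by
      convert hWγ j k using 4 with i
      simp [hD, abs_mul, abs_of_pos (ht i), Real.mul_rpow (ht i).le (abs_nonneg _)]
  calc cssl S t ρ γ p Θ Ω
      ≤ ∑ i, t i * (-Real.log (W i).det - d + ((W i - S i) * (Θ + Ω i)).trace)
          - ρ * matL1 Θ - γ * matL1p p Ω := by
        unfold cssl
        gcongr with i
        · exact (ht i).le
        · simpa using (hprimal i).log_det_sub_trace_mul_le (hWpd i) (S i)
    _ = (-∑ i, t i * Real.log (W i).det) - d + (((∑ i, D i) * Θ).trace - ρ * matL1 Θ)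
          + (∑ i, (D i * Ω i).trace - γ * matL1p p Ω) := by
        rw [sum_mul, trace_sum]
        simp only [hD, mul_add, trace_add, smul_mul, trace_smul, smul_eq_mul, sum_add_distrib,
          mul_sub, mul_neg, sum_sub_distrib, sum_neg_distrib, ← sum_mul, htsum, one_mul]
        ring
    _ ≤ (-∑ i, t i * Real.log (W i).det) - d := by linarith

/-- Weak duality for CSSL: every primal-feasible value is at most every dual-feasible
value. -/
theorem cssl_weak_duality (d N : ℕ) (hd : 1 ≤ d) (hN : 1 ≤ N)
    (S : Fin N → Matrix (Fin d) (Fin d) ℝ) (hS : ∀ i, (S i).PosSemidef)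
    (t : Fin N → ℝ) (ht : ∀ i, 0 < t i) (htsum : ∑ i, t i = 1)
    (ρ γ : ℝ) (hρ : 0 < ρ) (hγ : 0 < γ)
    (p q : ℝ) (hp : 1 < p) (hq : q = p / (p - 1))
    (Θ : Matrix (Fin d) (Fin d) ℝ) (Ω : Fin N → Matrix (Fin d) (Fin d) ℝ)
    (hprimal : ∀ i, (Θ + Ω i).PosDef)
    (W : Fin N → Matrix (Fin d) (Fin d) ℝ)
    (hWpd : ∀ i, (W i).PosDef)
    (hWρ : ∀ j j', |∑ i, t i * (W i j j' - S i j j')| ≤ ρ)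
    (hWγ : ∀ j j', (∑ i, t i ^ q * |W i j j' - S i j j'| ^ q) ^ (1 / q) ≤ γ) :
    cssl S t ρ γ p Θ Ω ≤ (- ∑ i, t i * Real.log (W i).det) - d :=
  cssl_weak_duality_general d N S t ht htsum ρ γ p q hp hq Θ Ω hprimal W hWpd hWρ hWγ
end

section
/- Bivariate hyper-parameter condition: let N ≥ 1, t₁, …, t_N > 0 with Σᵢ tᵢ = 1, ρ, γ > 0, p ∈ [1, ∞), and let S₁, …, S_N be symmetric positive definite 2×2 matrices with Sᵢ = [[aᵢ, rᵢ],[rᵢ, bᵢ]]. Consider maximizing G(θ, u, v, ω) = Σ_{i=1}^N tᵢ (log det(Θ+Ωᵢ) − tr(Sᵢ(Θ+Ωᵢ))) − 2ρ|θ| − 2γ‖ω‖_p over θ ∈ ℝ, u, v, ω ∈ ℝ^N, where Θ = [[0, θ],[θ, 0]] and Ωᵢ = [[uᵢ, ωᵢ],[ωᵢ, vᵢ]], subject to Θ+Ωᵢ being positive definite for all i. If max_{1≤i≤N} |rᵢ| ≤ γ and |Σ_{i=1}^N tᵢ rᵢ| ≤ ρ, then every maximizer satisfies θ = 0 and ωᵢ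 = 0 for all i. -/
/-! Compare a maximizer with the feasible point `(0, u, v, 0)` that keeps its diagonal. With
`sᵢ = θ + ωᵢ`, the log-det terms can only drop, `log (uᵢvᵢ - sᵢ²) ≤ log (uᵢvᵢ)`, strictly unless
`sᵢ = 0`, while the trace term `2 ∑ tᵢ rᵢ sᵢ` is paid for by the penalties: `|∑ tᵢ rᵢ| ≤ ρ` and
`∑ tᵢ |rᵢ ωᵢ| ≤ γ maxᵢ |ωᵢ| ≤ γ ‖ω‖_p`. Optimality therefore forces every `sᵢ = 0`; then the
remaining penalty `2ρ|θ| + 2γ‖ω‖_p` must vanish, so `θ = 0` and `ωᵢ = -θ = 0`. -/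

/-- The bivariate CSSL objective with regularization only on the off-diagonal entries. -/
noncomputable def bivarG {N : ℕ} (S : Fin N → Matrix (Fin 2) (Fin 2) ℝ) (t : Fin N → ℝ)
    (ρ γ p : ℝ) (θ : ℝ) (u v ω : Fin N → ℝ) : ℝ :=
  ∑ i, t i * (Real.log (!![(0 : ℝ), θ; θ, 0] + !![u i, ω i; ω i, v i]).det
      - Matrix.trace (S i * (!![(0 : ℝ), θ; θ, 0] + !![u i, ω i; ω i, v i])))
    - 2 * ρ * |θ| - 2 * γ * (∑ i, |ω i| ^ p) ^ (1 / p)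

open Finset Real

namespace Matrix

theorem posDef_fin_two_iff {x y z : ℝ} :
    (!![x, y; y, z]).PosDef ↔ 0 < x ∧ 0 < x * z - y * y := by
  constructor
  · intro h
    have hdet := h.det_pos
    rw [det_fin_two_of] at hdet
    exact ⟨h.diag_pos (i := 0), by linarith⟩
  · rintro ⟨hx, hdet⟩
    rw [posDef_iff_dotProduct_mulVec]
    refine ⟨by ext i j; fin_cases i <;> fin_cases j <;> rfl, fun w hw => ?_⟩
    have hquad : star w ⬝ᵥ (!![x, y; y, z] *ᵥ w) =
        x * w 0 ^ 2 + 2 * y * w 0 * w 1 + z * w 1 ^ 2 := by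
      simp only [dotProduct, Pi.star_apply, star_trivial, mulVec, of_apply, cons_val',
        cons_val_fin_one, Fin.sum_univ_two, cons_val_zero, cons_val_one]
      ring
    rw [hquad]
    by_cases hw1 : w 1 = 0
    · have hw0 : w 0 ≠ 0 := fun hw0 => hw (by ext i; fin_cases i <;> simp [hw0, hw1])
      simp only [hw1]
      nlinarith [mul_pos hx (sq_pos_of_ne_zero hw0)]
    · -- completing the square: `x q(w) = (x w₀ + y w₁)² + (x z - y²) w₁²`
      nlinarith [sq_nonneg (x * w 0 + y * w 1), mul_pos hdet (sq_pos_of_ne_zero hw1)]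

theorem posDef_antidiag_add_fin_two_iff {θ x y z : ℝ} :
    (!![(0 : ℝ), θ; θ, 0] + !![x, y; y, z]).PosDef ↔ 0 < x ∧ 0 < x * z - (θ + y) ^ 2 := by
  simp only [of_add_of, cons_add_cons, empty_add_empty, zero_add, posDef_fin_two_iff, ← sq]

theorem log_det_sub_trace_fin_two (a r b θ x y z : ℝ) :
    log (!![(0 : ℝ), θ; θ, 0] + !![x, y; y, z]).det
        - trace (!![a, r; r, b] * (!![(0 : ℝ), θ; θ, 0] + !![x, y; y, z]))
      = log (x * z - (θ + y) ^ 2) - (a * x + b * z + 2 * r * (θ + y)) := by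
  simp only [of_add_of, cons_add_cons, empty_add_empty, zero_add, mul_fin_two, det_fin_two_of,
    trace_fin_two_of]
  ring_nf

end Matrix

theorem bivarG_eq {N : ℕ} {a b r : Fin N → ℝ} {S : Fin N → Matrix (Fin 2) (Fin 2) ℝ}
    (hS : ∀ i, S i = !![a i, r i; r i, b i]) (t : Fin N → ℝ) (ρ γ p θ : ℝ)
    (u v ω : Fin N → ℝ) :
    bivarG S t ρ γ p θ u v ω =
      ∑ i, t i * (log (u i * v i - (θ + ω i) ^ 2) - (a i * u i + b i * v i + 2 * r i * (θ + ω i)))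
        - 2 * ρ * |θ| - 2 * γ * (∑ i, |ω i| ^ p) ^ (1 / p) := by
  simp only [bivarG, hS, Matrix.log_det_sub_trace_fin_two]

theorem bivarG_sub_bivarG_zero {N : ℕ} {a b r : Fin N → ℝ} {S : Fin N → Matrix (Fin 2) (Fin 2) ℝ}
    (hS : ∀ i, S i = !![a i, r i; r i, b i]) (t : Fin N → ℝ) (ρ γ : ℝ) {p : ℝ} (hp : 0 < p)
    (θ : ℝ) (u v ω : Fin N → ℝ) :
    bivarG S t ρ γ p θ u v ω - bivarG S t ρ γ p 0 u v 0 =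
      ∑ i, t i * (log (u i * v i - (θ + ω i) ^ 2) - log (u i * v i))
        - 2 * ∑ i, t i * r i * (θ + ω i) - 2 * ρ * |θ| - 2 * γ * (∑ i, |ω i| ^ p) ^ (1 / p) := by
  have hsum : ∑ i, t i * (log (u i * v i - (θ + ω i) ^ 2)
        - (a i * u i + b i * v i + 2 * r i * (θ + ω i)))
      - ∑ i, t i * (log (u i * v i) - (a i * u i + b i * v i))
      = ∑ i, t i * (log (u i * v i - (θ + ω i) ^ 2) - log (u i * v i))
        - 2 * ∑ i, t i * r i * (θ + ω i) := by
    rw [mul_sum, ← sum_sub_distrib, ← sum_sub_distrib]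
    exact sum_congr rfl fun i _ => by ring
  rw [bivarG_eq hS, bivarG_eq hS]
  simp only [Pi.zero_apply, add_zero, abs_zero, mul_zero, sub_zero, zero_rpow hp.ne',
    sum_const_zero, zero_rpow (one_div_pos.2 hp).ne', zero_pow two_ne_zero]
  linarith

theorem abs_le_rpow_sum_abs_rpow {ι : Type*} [Fintype ι] {p : ℝ} (hp : 0 < p) (x : ι → ℝ)
    (i : ι) : |x i| ≤ (∑ j, |x j| ^ p) ^ (1 / p) := by
  calc |x i| = (|x i| ^ p) ^ (1 / p) := by
        rw [← rpow_mul (abs_nonneg _), mul_one_div_cancel hp.ne', rpow_one]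
    _ ≤ (∑ j, |x j| ^ p) ^ (1 / p) := by
        gcongr
        exact single_le_sum (f := fun j => |x j| ^ p) (fun j _ => by positivity) (mem_univ i)

theorem abs_sum_mul_mul_add_le {ι : Type*} [Fintype ι] {t r ω : ι → ℝ} {ρ γ W : ℝ} (θ : ℝ)
    (ht : ∀ i, 0 ≤ t i) (htsum : ∑ i, t i = 1) (hγ : 0 ≤ γ) (hrγ : ∀ i, |r i| ≤ γ)
    (hrρ : |∑ i, t i * r i| ≤ ρ) (hωW : ∀ i, |ω i| ≤ W) :
    |∑ i, t i * r i * (θ + ω i)| ≤ ρ * |θ| + γ * W := by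
  have hθ : |θ * ∑ i, t i * r i| ≤ ρ * |θ| := by
    rw [abs_mul, mul_comm]
    exact mul_le_mul_of_nonneg_right hrρ (abs_nonneg θ)
  have hω : |∑ i, t i * r i * ω i| ≤ γ * W :=
    calc |∑ i, t i * r i * ω i| ≤ ∑ i, t i * (γ * W) := by
          refine (abs_sum_le_sum_abs _ _).trans (sum_le_sum fun i _ => ?_)
          rw [abs_mul, abs_mul, abs_of_nonneg (ht i), mul_assoc]
          gcongr
          · exact ht i
          · exact hrγ i
          · exact hωW i
      _ = γ * W := by rw [← sum_mul, htsum, one_mul]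
  calc |∑ i, t i * r i * (θ + ω i)| = |θ * ∑ i, t i * r i + ∑ i, t i * r i * ω i| := by
        rw [mul_sum, ← sum_add_distrib]; congr 1; exact sum_congr rfl fun i _ => by ring
    _ ≤ ρ * |θ| + γ * W := (abs_add_le _ _).trans (add_le_add hθ hω)

theorem Real.log_sub_sq_le_log {x s : ℝ} (h : 0 < x - s ^ 2) : log (x - s ^ 2) ≤ log x :=
  log_le_log h (by linarith [sq_nonneg s])

theorem Real.log_sub_sq_lt_log {x s : ℝ} (h : 0 < x - s ^ 2) (hs : s ≠ 0) :
    log (x - s ^ 2) < log x :=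
  log_lt_log h (by linarith [sq_pos_of_ne_zero hs])

theorem bivariate_hyperparameter_condition_general (N : ℕ)
    (t : Fin N → ℝ) (ht : ∀ i, 0 < t i) (htsum : ∑ i, t i = 1)
    (ρ γ p : ℝ) (hρ : 0 < ρ) (hγ : 0 < γ) (hp : 1 ≤ p)
    (a b r : Fin N → ℝ) (S : Fin N → Matrix (Fin 2) (Fin 2) ℝ)
    (hSdef : ∀ i, S i = !![a i, r i; r i, b i])
    (hrγ : ∀ i, |r i| ≤ γ) (hrρ : |∑ i, t i * r i| ≤ ρ)
    (θ : ℝ) (u v ω : Fin N → ℝ)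
    (hfeas : ∀ i, (!![(0 : ℝ), θ; θ, 0] + !![u i, ω i; ω i, v i]).PosDef)
    (hmax : ∀ (θ' : ℝ) (u' v' ω' : Fin N → ℝ),
      (∀ i, (!![(0 : ℝ), θ'; θ', 0] + !![u' i, ω' i; ω' i, v' i]).PosDef) →
      bivarG S t ρ γ p θ' u' v' ω' ≤ bivarG S t ρ γ p θ u v ω) :
    θ = 0 ∧ ∀ i, ω i = 0 := by
  have hp0 : 0 < p := by linarith
  have hu i := (Matrix.posDef_antidiag_add_fin_two_iff.1 (hfeas i)).1
  have hdet i := (Matrix.posDef_antidiag_add_fin_two_iff.1 (hfeas i)).2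
  have huv i : 0 < u i * v i := by nlinarith [hdet i, sq_nonneg (θ + ω i)]
  have hopt := hmax 0 u v 0 fun i =>
    Matrix.posDef_antidiag_add_fin_two_iff.2 ⟨hu i, by simpa using huv i⟩
  have hgain := bivarG_sub_bivarG_zero hSdef t ρ γ hp0 θ u v ω
  have hlin := abs_sum_mul_mul_add_le θ (fun i => (ht i).le) htsum hγ.le hrγ hrρ
    (abs_le_rpow_sum_abs_rpow hp0 ω)
  have hs : ∀ i, θ + ω i = 0 := by
    by_contra! ⟨i, hi⟩
    have hneg : ∑ j, t j * (log (u j * v j - (θ + ω j) ^ 2) - log (u j * v j))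
        < ∑ _j : Fin N, 0 :=
      sum_lt_sum
        (fun j _ => mul_nonpos_of_nonneg_of_nonpos (ht j).le
          (sub_nonpos.2 (Real.log_sub_sq_le_log (hdet j))))
        ⟨i, mem_univ i, mul_neg_of_pos_of_neg (ht i)
          (sub_neg.2 (Real.log_sub_sq_lt_log (hdet i) hi))⟩
    rw [sum_const_zero] at hneg
    linarith [abs_le.1 hlin]
  have hθ : θ = 0 := by
    simp only [hs, zero_pow two_ne_zero, sub_zero, sub_self, mul_zero, sum_const_zero] at hgain
    have hW : 0 ≤ (∑ i, |ω i| ^ p) ^ (1 / p) := by positivity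
    exact abs_nonpos_iff.1 (by nlinarith)
  exact ⟨hθ, fun i => by linarith [hs i]⟩

/-- Bivariate hyper-parameter condition: if `maxᵢ |rᵢ| ≤ γ` and `|∑ᵢ tᵢ rᵢ| ≤ ρ`, then every
maximizer of the bivariate CSSL problem has zero off-diagonal entries: `θ = 0` and `ω = 0`. -/
theorem bivariate_hyperparameter_condition (N : ℕ) (hN : 1 ≤ N)
    (t : Fin N → ℝ) (ht : ∀ i, 0 < t i) (htsum : ∑ i, t i = 1)
    (ρ γ p : ℝ) (hρ : 0 < ρ) (hγ : 0 < γ) (hp : 1 ≤ p)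
    (a b r : Fin N → ℝ) (S : Fin N → Matrix (Fin 2) (Fin 2) ℝ)
    (hSdef : ∀ i, S i = !![a i, r i; r i, b i]) (hSpd : ∀ i, (S i).PosDef)
    (hrγ : ∀ i, |r i| ≤ γ) (hrρ : |∑ i, t i * r i| ≤ ρ)
    (θ : ℝ) (u v ω : Fin N → ℝ)
    (hfeas : ∀ i, (!![(0 : ℝ), θ; θ, 0] + !![u i, ω i; ω i, v i]).PosDef)
    (hmax : ∀ (θ' : ℝ) (u' v' ω' : Fin N → ℝ),
      (∀ i, (!![(0 : ℝ), θ'; θ', 0] + !![u' i, ω' i; ω' i, v' i]).PosDef) →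
      bivarG S t ρ γ p θ' u' v' ω' ≤ bivarG S t ρ γ p θ u v ω) :
    θ = 0 ∧ ∀ i, ω i = 0 :=
  bivariate_hyperparameter_condition_general N t ht htsum ρ γ p hρ hγ hp a b r S hSdef hrγ hrρ θ u v
    ω hfeas hmax
end

section
/- Projection onto the pair of hyperplanes |1ᵀy| = ρ: let N ≥ 1, y₀ ∈ ℝ^N with 1ᵀy₀ ≠ 0, and ρ ≥ 0. Then the point y = y₀ − ((1ᵀy₀ − ρ·sgn(1ᵀy₀))/N)·1_N satisfies |1ᵀy| = ρ and minimizes (1/2)‖y' − y₀‖₂² over all y' ∈ ℝ^N with |1ᵀy'| = ρ. -/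
/-!
Any `y'` with `|1ᵀy'| = ρ` lies on one of the hyperplanes `1ᵀy' = ±ρ`, and by Cauchy–Schwarz
`‖y' − y₀‖₂² ≥ (1ᵀy' − 1ᵀy₀)² / N`, with equality for the shift of `y₀` along `1_N`. The
reverse triangle inequality shows that `ρ·sgn(1ᵀy₀)` is the point of `{±ρ}` nearest to `1ᵀy₀`.
-/

open Finset

section ShiftByConstant

variable {ι : Type*} [Fintype ι]

theorem sum_sub_sum_sq_div_card_le_sum_sq_sub (y y₀ : ι → ℝ) :
    (∑ i, y i - ∑ i, y₀ i) ^ 2 / Fintype.card ι ≤ ∑ i, (y i - y₀ i) ^ 2 := by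
  refine div_le_of_le_mul₀ (Nat.cast_nonneg _) (sum_nonneg fun i _ => sq_nonneg _) ?_
  rw [← sum_sub_distrib, mul_comm]
  simpa using sq_sum_le_card_mul_sum_sq (s := univ) (f := fun i => y i - y₀ i)

variable [Nonempty ι]

theorem sum_sub_div_card (y₀ : ι → ℝ) (t : ℝ) :
    ∑ i, (y₀ i - (∑ j, y₀ j - t) / Fintype.card ι) = t := by
  have : (Fintype.card ι : ℝ) ≠ 0 := Nat.cast_ne_zero.mpr Fintype.card_ne_zero
  rw [sum_sub_distrib, sum_const, card_univ, nsmul_eq_mul]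
  field_simp
  ring

theorem sum_sq_sub_div_card (y₀ : ι → ℝ) (t : ℝ) :
    ∑ i, ((y₀ i - (∑ j, y₀ j - t) / Fintype.card ι) - y₀ i) ^ 2
      = (∑ j, y₀ j - t) ^ 2 / Fintype.card ι := by
  have : (Fintype.card ι : ℝ) ≠ 0 := Nat.cast_ne_zero.mpr Fintype.card_ne_zero
  simp only [sub_sub_cancel_left, neg_sq, sum_const, card_univ, nsmul_eq_mul]
  field_simp

end ShiftByConstant

theorem abs_sub_mul_sign_le_abs_sub {s t ρ : ℝ} (ht : |t| = ρ) :
    |s - ρ * Real.sign s| ≤ |s - t| := by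
  refine le_trans ?_ (abs_abs_sub_abs_le_abs_sub s t)
  rw [ht]
  rcases lt_trichotomy s 0 with hs | rfl | hs
  · rw [Real.sign_of_neg hs, abs_of_neg hs, mul_neg_one, sub_neg_eq_add, ← abs_neg, neg_add']
  · simp [Real.sign_zero]
  · rw [Real.sign_of_pos hs, abs_of_pos hs, mul_one]

theorem abs_mul_sign_of_ne_zero {s ρ : ℝ} (hρ : 0 ≤ ρ) (hs : s ≠ 0) : |ρ * Real.sign s| = ρ := by
  rcases Real.sign_apply_eq_of_ne_zero s hs with h | h <;> simp [h, abs_of_nonneg hρ]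

theorem projection_onto_hyperplane_pair_general (N : ℕ) (y₀ : Fin N → ℝ)
    (ρ : ℝ) (hρ : 0 ≤ ρ) (hsum : ∑ i, y₀ i ≠ 0)
    (y : Fin N → ℝ)
    (hy : y = fun i => y₀ i - ((∑ j, y₀ j) - ρ * Real.sign (∑ j, y₀ j)) / N) :
    |∑ i, y i| = ρ ∧
    ∀ y' : Fin N → ℝ, |∑ i, y' i| = ρ →
      (1 / 2) * ∑ i, (y i - y₀ i) ^ 2 ≤ (1 / 2) * ∑ i, (y' i - y₀ i) ^ 2 := by
  have : Nonempty (Fin N) := (nonempty_of_sum_ne_zero hsum).to_type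
  set s := ∑ j, y₀ j
  obtain rfl : y = fun i => y₀ i - (s - ρ * Real.sign s) / Fintype.card (Fin N) := by
    simpa using hy
  refine ⟨by rw [sum_sub_div_card, abs_mul_sign_of_ne_zero hρ hsum], fun y' hy' => ?_⟩
  refine mul_le_mul_of_nonneg_left ?_ (by norm_num)
  calc ∑ i, ((y₀ i - (s - ρ * Real.sign s) / Fintype.card (Fin N)) - y₀ i) ^ 2
      = (s - ρ * Real.sign s) ^ 2 / Fintype.card (Fin N) := sum_sq_sub_div_card y₀ _
    _ ≤ (∑ i, y' i - s) ^ 2 / Fintype.card (Fin N) := by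
        refine div_le_div_of_nonneg_right ?_ (Nat.cast_nonneg _)
        rw [sq_le_sq, abs_sub_comm _ s]
        exact abs_sub_mul_sign_le_abs_sub hy'
    _ ≤ ∑ i, (y' i - y₀ i) ^ 2 := sum_sub_sum_sq_div_card_le_sum_sq_sub y' y₀

/-- Projection onto the pair of hyperplanes `|1ᵀy| = ρ`: the point
`y = y₀ − ((1ᵀy₀ − ρ·sgn(1ᵀy₀))/N)·1_N` lies on the constraint set and minimizes the
squared Euclidean distance to `y₀` over it. -/
theorem projection_onto_hyperplane_pair (N : ℕ) (hN : 1 ≤ N) (y₀ : Fin N → ℝ)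
    (ρ : ℝ) (hρ : 0 ≤ ρ) (hsum : ∑ i, y₀ i ≠ 0)
    (y : Fin N → ℝ)
    (hy : y = fun i => y₀ i - ((∑ j, y₀ j) - ρ * Real.sign (∑ j, y₀ j)) / N) :
    |∑ i, y i| = ρ ∧
    ∀ y' : Fin N → ℝ, |∑ i, y' i| = ρ →
      (1 / 2) * ∑ i, (y i - y₀ i) ^ 2 ≤ (1 / 2) * ∑ i, (y' i - y₀ i) ^ 2 :=
  projection_onto_hyperplane_pair_general N y₀ ρ hρ hsum y hy
end

section
/- Continuous quadratic knapsack solution by thresholding: let N ≥ 1, y₀ ∈ ℝ^N, γ > 0, and let ν ∈ ℝ satisfy Σ_{i=1}^N max(|y₀ᵢ| − ν, 0) = γ. Then the vector z with zᵢ = max(|y₀ᵢ| − ν, 0) minimizes Σ_{i=1}^N (1/2)(zᵢ' − |y₀ᵢ|)² over all z' ∈ ℝ^N with z' ≥ 0 (componentwise) and Σᵢ zᵢ' = γ. -/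
/-!
`ν` is a Lagrange multiplier for the constraint `∑ zᵢ = γ`: the soft threshold
`max (a - ν) 0` minimizes `w ↦ (1/2)(w - a)² + ν w` over `w ≥ 0`, so `z` minimizes the
Lagrangian coordinatewise, and the multiplier term `ν ∑ wᵢ` takes the same value `ν γ`
at every feasible point.
-/

open Finset

theorem half_sq_max_sub_sub_le (a ν w : ℝ) (hw : 0 ≤ w) :
    (1 / 2) * (max (a - ν) 0 - a) ^ 2 ≤ (1 / 2) * (w - a) ^ 2 + ν * (w - max (a - ν) 0) := by
  rcases le_total ν a with h | h
  · rw [max_eq_left (sub_nonneg.mpr h)]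
    nlinarith [sq_nonneg (w - (a - ν))]
  · rw [max_eq_right (sub_nonpos.mpr h)]
    nlinarith [sq_nonneg w]

theorem sum_half_sq_max_sub_sub_le {ι : Type*} [Fintype ι] (a w : ι → ℝ) (ν : ℝ)
    (hw : ∀ i, 0 ≤ w i) (hsum : ∑ i, w i = ∑ i, max (a i - ν) 0) :
    ∑ i, (1 / 2) * (max (a i - ν) 0 - a i) ^ 2 ≤ ∑ i, (1 / 2) * (w i - a i) ^ 2 := by
  have hmultiplier : ∑ i, ν * (w i - max (a i - ν) 0) = 0 := by
    rw [← mul_sum, sum_sub_distrib, hsum, sub_self, mul_zero]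
  calc ∑ i, (1 / 2) * (max (a i - ν) 0 - a i) ^ 2
      ≤ ∑ i, ((1 / 2) * (w i - a i) ^ 2 + ν * (w i - max (a i - ν) 0)) :=
        sum_le_sum fun i _ => half_sq_max_sub_sub_le (a i) ν (w i) (hw i)
    _ = ∑ i, (1 / 2) * (w i - a i) ^ 2 := by rw [sum_add_distrib, hmultiplier, add_zero]

theorem knapsack_thresholding_general (N : ℕ) (y₀ : Fin N → ℝ)
    (γ : ℝ) (ν : ℝ)
    (hν : ∑ i, max (|y₀ i| - ν) 0 = γ)
    (z : Fin N → ℝ) (hz : z = fun i => max (|y₀ i| - ν) 0) :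
    ∀ z' : Fin N → ℝ, (∀ i, 0 ≤ z' i) → (∑ i, z' i = γ) →
      ∑ i, (1 / 2) * (z i - |y₀ i|) ^ 2 ≤ ∑ i, (1 / 2) * (z' i - |y₀ i|) ^ 2 := by
  intro z' hz' hsum
  subst hz
  exact sum_half_sq_max_sub_sub_le (fun i => |y₀ i|) z' ν hz' (hsum.trans hν.symm)

/-- Continuous quadratic knapsack solution by thresholding: if `ν` satisfies
`∑ᵢ max(|y₀ᵢ| − ν, 0) = γ`, then `zᵢ = max(|y₀ᵢ| − ν, 0)` minimizes
`∑ᵢ (1/2)(zᵢ' − |y₀ᵢ|)²` over `{z' : z' ≥ 0, ∑ᵢ zᵢ' = γ}`. -/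
theorem knapsack_thresholding (N : ℕ) (hN : 1 ≤ N) (y₀ : Fin N → ℝ)
    (γ : ℝ) (hγ : 0 < γ) (ν : ℝ)
    (hν : ∑ i, max (|y₀ i| - ν) 0 = γ)
    (z : Fin N → ℝ) (hz : z = fun i => max (|y₀ i| - ν) 0) :
    ∀ z' : Fin N → ℝ, (∀ i, 0 ≤ z' i) → (∑ i, z' i = γ) →
      ∑ i, (1 / 2) * (z i - |y₀ i|) ^ 2 ≤ ∑ i, (1 / 2) * (z' i - |y₀ i|) ^ 2 :=
  knapsack_thresholding_general N y₀ γ ν hν z hz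
end

section
/- ℓ1-sphere projection via sign transfer: let N ≥ 1, y₀ ∈ ℝ^N, and 0 < γ < ‖y₀‖₁. If z* minimizes Σ_{i=1}^N (1/2)(zᵢ − |y₀ᵢ|)² over all z ∈ ℝ^N with z ≥ 0 (componentwise) and Σᵢ zᵢ = γ, then the vector y* with y*ᵢ = sgn(y₀ᵢ)·z*ᵢ minimizes (1/2)‖y − y₀‖₂² over all y ∈ ℝ^N with ‖y‖₁ = γ. -/
/-!
By the reverse triangle inequality `(1/2)‖y − y₀‖² ≥ (1/2) Σ (|yᵢ| − |y₀ᵢ|)²`, and `|y|` is feasible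
for the knapsack problem with data `a = |y₀|` whenever `‖y‖₁ = γ`. So the knapsack minimum bounds the
sphere problem from below, and `y*` attains that bound as soon as `z*ᵢ = 0` wherever `y₀ᵢ = 0`.
That follows from the optimality condition of the knapsack problem: if `z*ᵢ > 0` then
`z*ᵢ − aᵢ ≤ z*ⱼ − aⱼ` for every `j`, since otherwise shifting a little mass from `i` to `j` lowers
the cost. With `aᵢ = 0` this would give `z* > a` everywhere, hence `γ = Σ z* > Σ a > γ`.
-/

open Finset

def scaledSimplex (ι : Type*) [Fintype ι] (γ : ℝ) : Set (ι → ℝ) :=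
  {w | (∀ k, 0 ≤ w k) ∧ ∑ k, w k = γ}

section
variable {ι : Type*} [Fintype ι]

lemma sum_half_sq_sub_transfer [DecidableEq ι] (z a : ι → ℝ) {i j : ι} (hij : i ≠ j) (ε : ℝ) :
    ∑ k, (1 / 2) * ((z - Pi.single i ε + Pi.single j ε : ι → ℝ) k - a k) ^ 2 =
      ∑ k, (1 / 2) * (z k - a k) ^ 2 - ε * ((z i - a i) - (z j - a j)) + ε ^ 2 := by
  have hsupp : ∑ k, ((1 / 2) * ((z - Pi.single i ε + Pi.single j ε : ι → ℝ) k - a k) ^ 2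
      - (1 / 2) * (z k - a k) ^ 2) =
      ((1 / 2) * ((z i - ε) - a i) ^ 2 - (1 / 2) * (z i - a i) ^ 2)
        + ((1 / 2) * ((z j + ε) - a j) ^ 2 - (1 / 2) * (z j - a j) ^ 2) := by
    rw [Fintype.sum_eq_add i j hij]
    · simp [hij, hij.symm]
    · rintro k ⟨hki, hkj⟩
      simp [hki, hkj]
  rw [sum_sub_distrib] at hsupp
  linear_combination hsupp

lemma sub_le_sub_of_isMinOn {a z : ι → ℝ} {γ : ℝ}
    (hmin : IsMinOn (fun w => ∑ k, (1 / 2) * (w k - a k) ^ 2) (scaledSimplex ι γ) z)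
    (hz : z ∈ scaledSimplex ι γ) {i : ι} (hi : 0 < z i) (j : ι) :
    z i - a i ≤ z j - a j := by
  classical
  obtain rfl | hij := eq_or_ne i j
  · rfl
  by_contra! hlt
  set d := (z i - a i) - (z j - a j)
  set ε := min (z i) (d / 2)
  have hε : 0 < ε := lt_min hi (by linarith)
  have hmem : (z - Pi.single i ε + Pi.single j ε : ι → ℝ) ∈ scaledSimplex ι γ := by
    refine ⟨fun k => ?_, ?_⟩
    · have hεi : ε ≤ z i := min_le_left _ _
      simp only [Pi.add_apply, Pi.sub_apply, Pi.single_apply]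
      split_ifs with hki hkj <;> subst_vars <;> linarith [hz.1 k]
    · simp [sum_add_distrib, sum_sub_distrib, hz.2]
  have hcost := isMinOn_iff.1 hmin _ hmem
  simp only [sum_half_sq_sub_transfer z a hij ε] at hcost
  nlinarith [min_le_right (z i) (d / 2)]

lemma eq_zero_of_isMinOn_of_lt_sum {a z : ι → ℝ} {γ : ℝ}
    (hmin : IsMinOn (fun w => ∑ k, (1 / 2) * (w k - a k) ^ 2) (scaledSimplex ι γ) z)
    (hz : z ∈ scaledSimplex ι γ) (hγ : γ < ∑ k, a k)
    {i : ι} (hai : a i = 0) : z i = 0 := by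
  refine ((hz.1 i).eq_or_lt.resolve_right fun hi => hγ.not_ge ?_).symm
  rw [← hz.2]
  refine sum_le_sum fun j _ => ?_
  linarith [sub_le_sub_of_isMinOn hmin hz hi j, hz.1 i]

end

namespace Real

lemma abs_sign_mul {b z : ℝ} (hz : 0 ≤ z) (hbz : b = 0 → z = 0) : |sign b * z| = z := by
  rcases lt_trichotomy b 0 with hb | hb | hb
  · simp [sign_of_neg hb, abs_of_nonneg hz]
  · simp [hb, hbz hb]
  · simp [sign_of_pos hb, abs_of_nonneg hz]

lemma sign_mul_sub_sq {b z : ℝ} (hbz : b = 0 → z = 0) : (sign b * z - b) ^ 2 = (z - |b|) ^ 2 := by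
  rcases lt_trichotomy b 0 with hb | hb | hb
  · rw [sign_of_neg hb, abs_of_neg hb]; ring
  · simp [hb, hbz hb]
  · rw [sign_of_pos hb, abs_of_pos hb]; ring

end Real

lemma sum_half_sq_abs_sub_abs_le {ι : Type*} (s : Finset ι) (y b : ι → ℝ) :
    ∑ i ∈ s, (1 / 2) * (|y i| - |b i|) ^ 2 ≤ (1 / 2) * ∑ i ∈ s, (y i - b i) ^ 2 := by
  rw [mul_sum]
  exact sum_le_sum fun i _ =>
    mul_le_mul_of_nonneg_left (sq_le_sq.2 (abs_abs_sub_abs_le_abs_sub (y i) (b i))) (by norm_num)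

theorem l1_sphere_projection_sign_transfer_general (N : ℕ) (y₀ : Fin N → ℝ)
    (γ : ℝ) (hγ₁ : γ < ∑ i, |y₀ i|)
    (zs : Fin N → ℝ)
    (hzfeas : (∀ i, 0 ≤ zs i) ∧ ∑ i, zs i = γ)
    (hzmin : ∀ z : Fin N → ℝ, (∀ i, 0 ≤ z i) → (∑ i, z i = γ) →
      ∑ i, (1 / 2) * (zs i - |y₀ i|) ^ 2 ≤ ∑ i, (1 / 2) * (z i - |y₀ i|) ^ 2)
    (ys : Fin N → ℝ) (hys : ys = fun i => Real.sign (y₀ i) * zs i) :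
    (∑ i, |ys i|) = γ ∧
    ∀ y : Fin N → ℝ, (∑ i, |y i|) = γ →
      (1 / 2) * ∑ i, (ys i - y₀ i) ^ 2 ≤ (1 / 2) * ∑ i, (y i - y₀ i) ^ 2 := by
  have hmin : IsMinOn (fun w => ∑ k, (1 / 2) * (w k - |y₀ k|) ^ 2) (scaledSimplex (Fin N) γ) zs :=
    isMinOn_iff.2 fun w hw => hzmin w hw.1 hw.2
  have hvanish (i : Fin N) (hi : y₀ i = 0) : zs i = 0 :=
    eq_zero_of_isMinOn_of_lt_sum hmin hzfeas hγ₁ (by simp [hi])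
  subst hys
  refine ⟨?_, fun y hy => ?_⟩
  · rw [← hzfeas.2]
    exact sum_congr rfl fun i _ => Real.abs_sign_mul (hzfeas.1 i) (hvanish i)
  · calc (1 / 2) * ∑ i, (Real.sign (y₀ i) * zs i - y₀ i) ^ 2
        = ∑ i, (1 / 2) * (zs i - |y₀ i|) ^ 2 := by
          simp only [Real.sign_mul_sub_sq (hvanish _), mul_sum]
      _ ≤ ∑ i, (1 / 2) * (|y i| - |y₀ i|) ^ 2 := hzmin _ (fun i => abs_nonneg _) hy
      _ ≤ (1 / 2) * ∑ i, (y i - y₀ i) ^ 2 := sum_half_sq_abs_sub_abs_le _ _ _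

/-- `ℓ₁`-sphere projection via sign transfer: if `z*` solves the continuous quadratic
knapsack problem with data `|y₀|` and budget `γ < ‖y₀‖₁`, then `y*ᵢ = sgn(y₀ᵢ)·z*ᵢ`
minimizes `(1/2)‖y − y₀‖₂²` over the `ℓ₁`-sphere `{y : ‖y‖₁ = γ}`. -/
theorem l1_sphere_projection_sign_transfer (N : ℕ) (hN : 1 ≤ N) (y₀ : Fin N → ℝ)
    (γ : ℝ) (hγ₀ : 0 < γ) (hγ₁ : γ < ∑ i, |y₀ i|)
    (zs : Fin N → ℝ)
    (hzfeas : (∀ i, 0 ≤ zs i) ∧ ∑ i, zs i = γ)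
    (hzmin : ∀ z : Fin N → ℝ, (∀ i, 0 ≤ z i) → (∑ i, z i = γ) →
      ∑ i, (1 / 2) * (zs i - |y₀ i|) ^ 2 ≤ ∑ i, (1 / 2) * (z i - |y₀ i|) ^ 2)
    (ys : Fin N → ℝ) (hys : ys = fun i => Real.sign (y₀ i) * zs i) :
    (∑ i, |ys i|) = γ ∧
    ∀ y : Fin N → ℝ, (∑ i, |y i|) = γ →
      (1 / 2) * ∑ i, (ys i - y₀ i) ^ 2 ≤ (1 / 2) * ∑ i, (y i - y₀ i) ^ 2 :=
  l1_sphere_projection_sign_transfer_general N y₀ γ hγ₁ zs hzfeas hzmin ys hys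
end

section
/- CSSL reduces to MSICS when ρ ≥ N^{1/p} γ: let d, N ≥ 1, S₁, …, S_N symmetric positive semidefinite real d×d matrices, t₁, …, t_N > 0 with Σᵢ tᵢ = 1, p ∈ [1, ∞), γ ≥ 0, and ρ ≥ N^{1/p} γ. Then for every (Θ, Ω) with Θ+Ωᵢ symmetric positive definite for all i, shifting the common part into the individual parts does not decrease the objective: g(0_{d×d}, (Θ+Ω₁, …, Θ+Ω_N)) ≥ g(Θ, (Ω₁, …, Ω_N)). -/
open Finset

theorem Real.rpow_sum_const_rpow_one_div {ι : Type*} [Fintype ι] {p : ℝ} (hp : p ≠ 0) (a : ℝ) :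
    (∑ _ : ι, |a| ^ p) ^ (1 / p) = (Fintype.card ι : ℝ) ^ (1 / p) * |a| := by
  rw [sum_const, card_univ, nsmul_eq_mul, Real.mul_rpow (by positivity) (by positivity),
    ← Real.rpow_mul (abs_nonneg a), mul_one_div_cancel hp, Real.rpow_one]

@[simp]
theorem matL1_zero (d : ℕ) : matL1 (0 : Matrix (Fin d) (Fin d) ℝ) = 0 := by
  simp [matL1]

theorem matL1_nonneg {d : ℕ} (A : Matrix (Fin d) (Fin d) ℝ) : 0 ≤ matL1 A :=
  sum_nonneg fun _ _ => sum_nonneg fun _ _ => abs_nonneg _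

theorem matL1p_add_const_le {d N : ℕ} {p : ℝ} (hp : 1 ≤ p) (Θ : Matrix (Fin d) (Fin d) ℝ)
    (Ω : Fin N → Matrix (Fin d) (Fin d) ℝ) :
    matL1p p (fun i => Θ + Ω i) ≤ (N : ℝ) ^ (1 / p) * matL1 Θ + matL1p p Ω := by
  unfold matL1p matL1
  rw [mul_sum, ← sum_add_distrib]
  refine sum_le_sum fun j _ => ?_
  rw [mul_sum, ← sum_add_distrib]
  refine sum_le_sum fun j' _ => ?_
  calc (∑ i, |(Θ + Ω i) j j'| ^ p) ^ (1 / p)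
      ≤ (∑ _ : Fin N, |Θ j j'| ^ p) ^ (1 / p) + (∑ i, |Ω i j j'| ^ p) ^ (1 / p) :=
        Real.Lp_add_le univ (fun _ => Θ j j') (fun i => Ω i j j') hp
    _ = (N : ℝ) ^ (1 / p) * |Θ j j'| + (∑ i, |Ω i j j'| ^ p) ^ (1 / p) := by
        rw [Real.rpow_sum_const_rpow_one_div (by linarith), Fintype.card_fin]

theorem cssl_le_cssl_zero_iff {d N : ℕ} (S : Fin N → Matrix (Fin d) (Fin d) ℝ) (t : Fin N → ℝ)
    (ρ γ p : ℝ) (Θ : Matrix (Fin d) (Fin d) ℝ) (Ω : Fin N → Matrix (Fin d) (Fin d) ℝ) :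
    cssl S t ρ γ p Θ Ω ≤ cssl S t ρ γ p 0 (fun i => Θ + Ω i) ↔
      γ * matL1p p (fun i => Θ + Ω i) ≤ ρ * matL1 Θ + γ * matL1p p Ω := by
  simp only [cssl, zero_add, matL1_zero, mul_zero, sub_zero]
  constructor <;> intro h <;> linarith

theorem cssl_reduces_to_msics_general (d N : ℕ)
    (S : Fin N → Matrix (Fin d) (Fin d) ℝ)
    (t : Fin N → ℝ)
    (p ρ γ : ℝ) (hp : 1 ≤ p) (hγ : 0 ≤ γ) (hργ : (N : ℝ) ^ (1 / p) * γ ≤ ρ)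
    (Θ : Matrix (Fin d) (Fin d) ℝ) (Ω : Fin N → Matrix (Fin d) (Fin d) ℝ) :
    cssl S t ρ γ p Θ Ω ≤ cssl S t ρ γ p 0 (fun i => Θ + Ω i) := by
  rw [cssl_le_cssl_zero_iff]
  calc γ * matL1p p (fun i => Θ + Ω i)
      ≤ γ * ((N : ℝ) ^ (1 / p) * matL1 Θ + matL1p p Ω) :=
        mul_le_mul_of_nonneg_left (matL1p_add_const_le hp Θ Ω) hγ
    _ = (N : ℝ) ^ (1 / p) * γ * matL1 Θ + γ * matL1p p Ω := by ring
    _ ≤ ρ * matL1 Θ + γ * matL1p p Ω := by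
        gcongr
        exact matL1_nonneg Θ

/-- CSSL reduces to MSICS when `ρ ≥ N^{1/p} γ`: moving the common part into the individual
parts does not decrease the CSSL objective. -/
theorem cssl_reduces_to_msics (d N : ℕ) (hd : 1 ≤ d) (hN : 1 ≤ N)
    (S : Fin N → Matrix (Fin d) (Fin d) ℝ) (hS : ∀ i, (S i).PosSemidef)
    (t : Fin N → ℝ) (ht : ∀ i, 0 < t i) (htsum : ∑ i, t i = 1)
    (p ρ γ : ℝ) (hp : 1 ≤ p) (hγ : 0 ≤ γ) (hργ : (N : ℝ) ^ (1 / p) * γ ≤ ρ)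
    (Θ : Matrix (Fin d) (Fin d) ℝ) (Ω : Fin N → Matrix (Fin d) (Fin d) ℝ)
    (hfeas : ∀ i, (Θ + Ω i).PosDef) :
    cssl S t ρ γ p Θ Ω ≤ cssl S t ρ γ p 0 (fun i => Θ + Ω i) :=
  cssl_reduces_to_msics_general d N S t p ρ γ hp hγ hργ Θ Ω
end

section
/- Positive definiteness of the coupled block matrix: let d₁, d₂, b ≥ 1, let Ψ₁ = V₁ D₁ V₁ᵀ and Ψ₂ = V₂ D₂ V₂ᵀ where V₁ ∈ ℝ^{d₁×d₁}, V₂ ∈ ℝ^{d₂×d₂} are orthogonal matrices and D₁ = diag(σ_{1,1}, …, σ_{1,d₁}), D₂ = diag(σ_{2,1}, …, σ_{2,d₂}) have strictly positive diagonal entries. Let π₁ : {1,…,b} → {1,…,d₁} and π₂ : {1,…,b} → {1,…,d₂} be injective, let ξ ∈ ℝ^b satisfy ξₘ² < σ_{1,π₁(m)} σ_{2,π₂(m)} for all m, and set Φ = Σ_{m=1}^b ξₘ v_{1,π₁(m)} v_{2,π₂(m)}ᵀ, where v_{k,j} denotes the j-th column of V_k. Then the (d₁+d₂)×(d₁+d₂)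 block matrix Λ = [[Ψ₁, Φ],[Φᵀ, Ψ₂]] is symmetric positive definite. -/
/-!
In the eigenbases, `u = V₁ᵀ x₁` and `w = V₂ᵀ x₂`, the quadratic form of the block matrix is
`∑ σ₁ᵢ uᵢ² + 2 ∑ₘ ξₘ u_{π₁ m} w_{π₂ m} + ∑ σ₂ⱼ wⱼ²`. The finitely many strict inequalities
`ξₘ² < σ₁ σ₂` leave a common slack `s < 1` with `ξₘ² ≤ s² σ₁ σ₂`, so that each coupled pair of
coordinates satisfies `2 ξₘ a b ≥ -s (σ₁ a² + σ₂ b²)`. As `π₁` and `π₂` are injective, every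
coordinate is charged at most once, and the form is at least `(1 - s) (∑ σ₁ᵢ uᵢ² + ∑ σ₂ⱼ wⱼ²) > 0`.
-/

open Matrix

open Filter Topology in
theorem exists_lt_one_forall_sq_le_sq_mul {κ : Type*} [Finite κ] {ξ c : κ → ℝ}
    (h : ∀ m, ξ m ^ 2 < c m) : ∃ s < 1, 0 < s ∧ ∀ m, ξ m ^ 2 ≤ s ^ 2 * c m := by
  have hnear : ∀ m, ∀ᶠ s in 𝓝[<] (1 : ℝ), ξ m ^ 2 < s ^ 2 * c m := fun m =>
    Tendsto.eventually_const_lt (by simpa using h m)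
      ((Continuous.tendsto (by fun_prop) 1).mono_left nhdsWithin_le_nhds)
  obtain ⟨s, hs, hs1, hs0⟩ := ((eventually_all.2 hnear).and (eventually_mem_nhdsWithin.and
    ((eventually_gt_nhds one_pos).filter_mono nhdsWithin_le_nhds))).exists
  exact ⟨s, hs1, hs0, fun m => (hs m).le⟩

theorem binary_quadForm_nonneg_of_sq_le {p q s ξ : ℝ} (hp : 0 < p) (hs : 0 < s)
    (hξ : ξ ^ 2 ≤ s ^ 2 * (p * q)) (a b : ℝ) :
    0 ≤ s * (p * a ^ 2 + q * b ^ 2) + 2 * (ξ * a * b) := by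
  refine nonneg_of_mul_nonneg_right ?_ (mul_pos hs hp)
  -- `s p` times the form is `(s p a + ξ b)² + (s² p q - ξ²) b²`
  nlinarith [sq_nonneg (s * p * a + ξ * b), sq_nonneg b]

theorem Function.Injective.sum_comp_le {ι κ : Type*} [Fintype ι] [Fintype κ] {π : κ → ι}
    (hπ : Function.Injective π) {f : ι → ℝ} (hf : ∀ i, 0 ≤ f i) : ∑ m, f (π m) ≤ ∑ i, f i := by
  simpa [Finset.sum_map] using
    Finset.sum_le_univ_sum_of_nonneg (s := Finset.univ.map ⟨π, hπ⟩) hf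

theorem sum_mul_sq_pos {ι : Type*} [Fintype ι] {σ u : ι → ℝ} (hσ : ∀ i, 0 < σ i) (hu : u ≠ 0) :
    0 < ∑ i, σ i * u i ^ 2 := by
  obtain ⟨i, hi⟩ := Function.ne_iff.mp hu
  exact Finset.sum_pos' (fun j _ => mul_nonneg (hσ j).le (sq_nonneg _))
    ⟨i, Finset.mem_univ i, mul_pos (hσ i) (sq_pos_of_ne_zero hi)⟩

theorem coupled_quadratic_form_pos {ι₁ ι₂ κ : Type*} [Fintype ι₁] [Fintype ι₂] [Fintype κ]
    {σ₁ : ι₁ → ℝ} {σ₂ : ι₂ → ℝ} (hσ₁ : ∀ i, 0 < σ₁ i) (hσ₂ : ∀ j, 0 < σ₂ j)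
    {π₁ : κ → ι₁} {π₂ : κ → ι₂} (hπ₁ : Function.Injective π₁) (hπ₂ : Function.Injective π₂)
    {ξ : κ → ℝ} (hξ : ∀ m, ξ m ^ 2 < σ₁ (π₁ m) * σ₂ (π₂ m))
    {u : ι₁ → ℝ} {w : ι₂ → ℝ} (huw : u ≠ 0 ∨ w ≠ 0) :
    0 < ∑ i, σ₁ i * u i ^ 2 + 2 * ∑ m, ξ m * u (π₁ m) * w (π₂ m) + ∑ j, σ₂ j * w j ^ 2 := by
  obtain ⟨s, hs1, hs0, hs⟩ := exists_lt_one_forall_sq_le_sq_mul hξ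
  have hnonneg₁ : ∀ i, 0 ≤ σ₁ i * u i ^ 2 := fun i => mul_nonneg (hσ₁ i).le (sq_nonneg _)
  have hnonneg₂ : ∀ j, 0 ≤ σ₂ j * w j ^ 2 := fun j => mul_nonneg (hσ₂ j).le (sq_nonneg _)
  have hdiag : 0 < ∑ i, σ₁ i * u i ^ 2 + ∑ j, σ₂ j * w j ^ 2 := by
    rcases huw with hu | hw
    · exact add_pos_of_pos_of_nonneg (sum_mul_sq_pos hσ₁ hu)
        (Finset.sum_nonneg fun j _ => hnonneg₂ j)
    · exact add_pos_of_nonneg_of_pos (Finset.sum_nonneg fun i _ => hnonneg₁ i)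
        (sum_mul_sq_pos hσ₂ hw)
  have hpairs : 0 ≤ ∑ m, (s * (σ₁ (π₁ m) * u (π₁ m) ^ 2 + σ₂ (π₂ m) * w (π₂ m) ^ 2)
      + 2 * (ξ m * u (π₁ m) * w (π₂ m))) :=
    Finset.sum_nonneg fun m _ => binary_quadForm_nonneg_of_sq_le (hσ₁ _) hs0 (hs m) _ _
  rw [Finset.sum_add_distrib, ← Finset.mul_sum, Finset.sum_add_distrib, ← Finset.mul_sum] at hpairs
  have hcharged := add_le_add (hπ₁.sum_comp_le hnonneg₁) (hπ₂.sum_comp_le hnonneg₂)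
  linarith [mul_pos (sub_pos.2 hs1) hdiag, mul_le_mul_of_nonneg_left hcharged hs0.le]

theorem dotProduct_fromBlocks_mulVec {m n R : Type*} [Fintype m] [Fintype n] [CommRing R]
    (A : Matrix m m R) (B : Matrix m n R) (D : Matrix n n R) (x : m → R) (y : n → R) :
    Sum.elim x y ⬝ᵥ (fromBlocks A B Bᵀ D *ᵥ Sum.elim x y)
      = x ⬝ᵥ (A *ᵥ x) + 2 * (x ⬝ᵥ (B *ᵥ y)) + y ⬝ᵥ (D *ᵥ y) := by
  have hB : y ⬝ᵥ (Bᵀ *ᵥ x) = x ⬝ᵥ (B *ᵥ y) := by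
    rw [mulVec_transpose, dotProduct_comm, dotProduct_mulVec]
  rw [fromBlocks_mulVec, Sum.elim_comp_inl, Sum.elim_comp_inr, sumElim_dotProduct_sumElim,
    dotProduct_add, dotProduct_add, hB]
  ring

theorem dotProduct_mul_diagonal_mul_transpose_mulVec {m n R : Type*} [Fintype m] [Fintype n]
    [DecidableEq n] [CommRing R] (V : Matrix m n R) (σ : n → R) (x : m → R) :
    x ⬝ᵥ ((V * diagonal σ * Vᵀ) *ᵥ x) = ∑ i, σ i * (Vᵀ *ᵥ x) i ^ 2 := by
  rw [← mulVec_mulVec, ← mulVec_mulVec, dotProduct_mulVec, ← mulVec_transpose, dotProduct_comm]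
  simp only [dotProduct, mulVec_diagonal]
  exact Finset.sum_congr rfl fun i _ => by ring

theorem dotProduct_of_sum_mul_mulVec {m₁ m₂ n₁ n₂ κ R : Type*} [Fintype m₁] [Fintype m₂]
    [Fintype κ] [CommRing R] (V₁ : Matrix m₁ n₁ R) (V₂ : Matrix m₂ n₂ R) (π₁ : κ → n₁)
    (π₂ : κ → n₂) (ξ : κ → R) (x : m₁ → R) (y : m₂ → R) :
    x ⬝ᵥ (of (fun j j' => ∑ m, ξ m * V₁ j (π₁ m) * V₂ j' (π₂ m)) *ᵥ y)
      = ∑ m, ξ m * (V₁ᵀ *ᵥ x) (π₁ m) * (V₂ᵀ *ᵥ y) (π₂ m) := by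
  simp only [dotProduct, mulVec, of_apply, transpose_apply, Finset.sum_mul, Finset.mul_sum]
  rw [Finset.sum_comm_cycle]
  refine Finset.sum_congr rfl fun m _ => ?_
  rw [Finset.sum_comm]
  exact Finset.sum_congr rfl fun j _ => Finset.sum_congr rfl fun j' _ => by ring

theorem isHermitian_mul_diagonal_mul_transpose {m n : Type*} [Fintype n] [DecidableEq n]
    (V : Matrix m n ℝ) (σ : n → ℝ) : (V * diagonal σ * Vᵀ).IsHermitian := by
  simpa [conjTranspose_eq_transpose_of_trivial] using
    isHermitian_mul_mul_conjTranspose V (isHermitian_diagonal σ)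

theorem transpose_mulVec_ne_zero {n : Type*} [Fintype n] [DecidableEq n] {V : Matrix n n ℝ}
    (hV : V * Vᵀ = 1) {x : n → ℝ} (hx : x ≠ 0) : Vᵀ *ᵥ x ≠ 0 := fun h =>
  hx (by simpa [mulVec_mulVec, hV] using congrArg (V *ᵥ ·) h)

theorem coupled_block_posDef_general (d₁ d₂ b : ℕ)
    (V₁ : Matrix (Fin d₁) (Fin d₁) ℝ) (V₂ : Matrix (Fin d₂) (Fin d₂) ℝ)
    (hV₁ : V₁ᵀ * V₁ = 1 ∧ V₁ * V₁ᵀ = 1) (hV₂ : V₂ᵀ * V₂ = 1 ∧ V₂ * V₂ᵀ = 1)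
    (σ₁ : Fin d₁ → ℝ) (σ₂ : Fin d₂ → ℝ)
    (hσ₁ : ∀ j, 0 < σ₁ j) (hσ₂ : ∀ j, 0 < σ₂ j)
    (Ψ₁ : Matrix (Fin d₁) (Fin d₁) ℝ) (hΨ₁ : Ψ₁ = V₁ * Matrix.diagonal σ₁ * V₁ᵀ)
    (Ψ₂ : Matrix (Fin d₂) (Fin d₂) ℝ) (hΨ₂ : Ψ₂ = V₂ * Matrix.diagonal σ₂ * V₂ᵀ)
    (π₁ : Fin b → Fin d₁) (π₂ : Fin b → Fin d₂)
    (hπ₁ : Function.Injective π₁) (hπ₂ : Function.Injective π₂)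
    (ξ : Fin b → ℝ) (hξ : ∀ m, ξ m ^ 2 < σ₁ (π₁ m) * σ₂ (π₂ m))
    (Φ : Matrix (Fin d₁) (Fin d₂) ℝ)
    (hΦ : Φ = Matrix.of fun j j' => ∑ m, ξ m * V₁ j (π₁ m) * V₂ j' (π₂ m)) :
    (Matrix.fromBlocks Ψ₁ Φ Φᵀ Ψ₂).PosDef := by
  subst hΨ₁ hΨ₂ hΦ
  refine posDef_iff_dotProduct_mulVec.2 ⟨?_, fun x hx => ?_⟩
  · exact isHermitian_fromBlocks_iff.2 ⟨isHermitian_mul_diagonal_mul_transpose V₁ σ₁,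
      conjTranspose_eq_transpose_of_trivial _, by simp [conjTranspose_eq_transpose_of_trivial],
      isHermitian_mul_diagonal_mul_transpose V₂ σ₂⟩
  · rw [star_trivial, ← Sum.elim_comp_inl_inr x, dotProduct_fromBlocks_mulVec,
      dotProduct_mul_diagonal_mul_transpose_mulVec, dotProduct_mul_diagonal_mul_transpose_mulVec,
      dotProduct_of_sum_mul_mulVec]
    refine coupled_quadratic_form_pos hσ₁ hσ₂ hπ₁ hπ₂ hξ ?_
    have hblock : x ∘ Sum.inl ≠ 0 ∨ x ∘ Sum.inr ≠ 0 := by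
      by_contra! h
      exact hx (by rw [← Sum.elim_comp_inl_inr x, h.1, h.2, Sum.elim_zero_zero])
    exact hblock.imp (transpose_mulVec_ne_zero hV₁.2) (transpose_mulVec_ne_zero hV₂.2)

/-- Positive definiteness of the coupled block matrix used to generate synthetic precision
matrices with a common substructure: if `Ψ₁ = V₁D₁V₁ᵀ`, `Ψ₂ = V₂D₂V₂ᵀ` with `V₁, V₂`
orthogonal and positive diagonal `D₁, D₂`, and `Φ = ∑ₘ ξₘ v_{1,π₁(m)} v_{2,π₂(m)}ᵀ`
with injective index maps and `ξₘ² < σ_{1,π₁(m)} σ_{2,π₂(m)}`, then the block matrix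
`[[Ψ₁, Φ], [Φᵀ, Ψ₂]]` is symmetric positive definite. -/
theorem coupled_block_posDef (d₁ d₂ b : ℕ) (hd₁ : 1 ≤ d₁) (hd₂ : 1 ≤ d₂) (hb : 1 ≤ b)
    (V₁ : Matrix (Fin d₁) (Fin d₁) ℝ) (V₂ : Matrix (Fin d₂) (Fin d₂) ℝ)
    (hV₁ : V₁ᵀ * V₁ = 1 ∧ V₁ * V₁ᵀ = 1) (hV₂ : V₂ᵀ * V₂ = 1 ∧ V₂ * V₂ᵀ = 1)
    (σ₁ : Fin d₁ → ℝ) (σ₂ : Fin d₂ → ℝ)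
    (hσ₁ : ∀ j, 0 < σ₁ j) (hσ₂ : ∀ j, 0 < σ₂ j)
    (Ψ₁ : Matrix (Fin d₁) (Fin d₁) ℝ) (hΨ₁ : Ψ₁ = V₁ * Matrix.diagonal σ₁ * V₁ᵀ)
    (Ψ₂ : Matrix (Fin d₂) (Fin d₂) ℝ) (hΨ₂ : Ψ₂ = V₂ * Matrix.diagonal σ₂ * V₂ᵀ)
    (π₁ : Fin b → Fin d₁) (π₂ : Fin b → Fin d₂)
    (hπ₁ : Function.Injective π₁) (hπ₂ : Function.Injective π₂)
    (ξ : Fin b → ℝ) (hξ : ∀ m, ξ m ^ 2 < σ₁ (π₁ m) * σ₂ (π₂ m))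
    (Φ : Matrix (Fin d₁) (Fin d₂) ℝ)
    (hΦ : Φ = Matrix.of fun j j' => ∑ m, ξ m * V₁ j (π₁ m) * V₂ j' (π₂ m)) :
    (Matrix.fromBlocks Ψ₁ Φ Φᵀ Ψ₂).PosDef :=
  coupled_block_posDef_general d₁ d₂ b V₁ V₂ hV₁ hV₂ σ₁ σ₂ hσ₁ hσ₂ Ψ₁ hΨ₁ Ψ₂ hΨ₂ π₁ π₂ hπ₁ hπ₂ ξ hξ
    Φ hΦ
end

section
/- Spectral solution of the DAL-ADMM W-update equation: let d ≥ 1, c > 0, and let M be a real symmetric d×d matrix with eigendecomposition M = P D Pᵀ, P orthogonal and D = diag(σ₁, …, σ_d). Define W = P D̃ Pᵀ where D̃ = diag(σ̃₁, …, σ̃_d) and σ̃ₘ = (σₘ + √(σₘ² + 4c))/2. Then W is symmetric positive definite, invertible, and satisfies W − c·W⁻¹ = M. -/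
/-!
Conjugation by the orthogonal matrix `P` preserves positive definiteness and commutes with
inversion, so everything reduces to the diagonal case. There `σ̃ₘ` is the positive root of
`t² - σₘ t - c = 0`, i.e. `σ̃ₘ - c / σ̃ₘ = σₘ`.
-/

open Matrix

namespace Matrix

variable {n : Type*} [Fintype n] [DecidableEq n]

theorem inv_diagonal_of_ne_zero {K : Type*} [Field K] {v : n → K} (hv : ∀ i, v i ≠ 0) :
    (diagonal v)⁻¹ = diagonal v⁻¹ :=
  inv_eq_left_inv <| by
    rw [diagonal_mul_diagonal, ← diagonal_one]
    exact congrArg diagonal (funext fun i => inv_mul_cancel₀ (hv i))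

theorem inv_mul_mul_transpose_of_mul_transpose_eq_one {R : Type*} [CommRing R]
    {P : Matrix n n R} (hP : P * Pᵀ = 1) (A : Matrix n n R) :
    (P * A * Pᵀ)⁻¹ = P * A⁻¹ * Pᵀ := by
  rw [mul_inv_rev, mul_inv_rev, inv_eq_left_inv hP, inv_eq_right_inv hP, Matrix.mul_assoc]

theorem PosDef.mul_mul_transpose_of_mul_transpose_eq_one {P A : Matrix n n ℝ}
    (hA : A.PosDef) (hP : P * Pᵀ = 1) : (P * A * Pᵀ).PosDef := by
  simpa using hA.mul_mul_conjTranspose_same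
    (vecMul_injective_iff_isUnit.mpr <|
      (isUnit_iff_isUnit_det P).mpr (isUnit_det_of_right_inverse hP))

end Matrix

theorem add_sqrt_sq_add_div_two_pos {c : ℝ} (hc : 0 < c) (x : ℝ) :
    0 < (x + √(x ^ 2 + 4 * c)) / 2 := by
  have : |x| < √(x ^ 2 + 4 * c) := by
    rw [← Real.sqrt_sq_eq_abs]; exact Real.sqrt_lt_sqrt (sq_nonneg x) (by linarith)
  linarith [neg_abs_le x]

theorem add_sqrt_sq_add_div_two_sub_div {c : ℝ} (hc : 0 < c) (x : ℝ) :
    (x + √(x ^ 2 + 4 * c)) / 2 - c / ((x + √(x ^ 2 + 4 * c)) / 2) = x := by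
  have hs : x + √(x ^ 2 + 4 * c) ≠ 0 :=
    ne_of_gt (by linarith [add_sqrt_sq_add_div_two_pos hc x])
  have hsq : √(x ^ 2 + 4 * c) ^ 2 = x ^ 2 + 4 * c := Real.sq_sqrt (by positivity)
  field_simp
  linear_combination hsq

theorem dal_admm_W_update_general (d : ℕ) (c : ℝ) (hc : 0 < c)
    (M : Matrix (Fin d) (Fin d) ℝ)
    (P : Matrix (Fin d) (Fin d) ℝ) (hP : Pᵀ * P = 1 ∧ P * Pᵀ = 1)
    (σ : Fin d → ℝ) (hdecomp : M = P * Matrix.diagonal σ * Pᵀ)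
    (W : Matrix (Fin d) (Fin d) ℝ)
    (hW : W = P * Matrix.diagonal (fun m => (σ m + Real.sqrt (σ m ^ 2 + 4 * c)) / 2) * Pᵀ) :
    W.PosDef ∧ IsUnit W ∧ W - c • W⁻¹ = M := by
  have hpos m := add_sqrt_sq_add_div_two_pos hc (σ m)
  have hWpd : W.PosDef :=
    hW ▸ (PosDef.diagonal hpos).mul_mul_transpose_of_mul_transpose_eq_one hP.2
  refine ⟨hWpd, hWpd.isUnit, ?_⟩
  rw [hdecomp, hW, inv_mul_mul_transpose_of_mul_transpose_eq_one hP.2,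
    inv_diagonal_of_ne_zero fun m => (hpos m).ne', ← Matrix.smul_mul, ← Matrix.mul_smul,
    ← diagonal_smul, ← Matrix.sub_mul, ← Matrix.mul_sub, diagonal_sub]
  congr 3 with m
  exact add_sqrt_sq_add_div_two_sub_div hc (σ m)

/-- Spectral solution of the DAL-ADMM `W`-update equation: if `M = P D Pᵀ` is a symmetric
eigendecomposition, then `W = P D̃ Pᵀ` with `σ̃ₘ = (σₘ + √(σₘ² + 4c))/2` is symmetric
positive definite, invertible, and solves `W − c·W⁻¹ = M`. -/
theorem dal_admm_W_update (d : ℕ) (hd : 1 ≤ d) (c : ℝ) (hc : 0 < c)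
    (M : Matrix (Fin d) (Fin d) ℝ) (hM : M.IsSymm)
    (P : Matrix (Fin d) (Fin d) ℝ) (hP : Pᵀ * P = 1 ∧ P * Pᵀ = 1)
    (σ : Fin d → ℝ) (hdecomp : M = P * Matrix.diagonal σ * Pᵀ)
    (W : Matrix (Fin d) (Fin d) ℝ)
    (hW : W = P * Matrix.diagonal (fun m => (σ m + Real.sqrt (σ m ^ 2 + 4 * c)) / 2) * Pᵀ) :
    W.PosDef ∧ IsUnit W ∧ W - c • W⁻¹ = M :=
  dal_admm_W_update_general d c hc M P hP σ hdecomp W hW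
end
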